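/- arXiv:1910.08281 — 2 statements merged into one kernel-verified Lean document; each statement's English description precedes it below -/
import Mathlib

section
/- Let a ∈ (0,1), let μ₀, μ₁, μ₂ ∈ ℝ and σ₀, σ > 0 with μ₁ ≠ μ₂, and let f : ℝ → ℝ be an admissible flow such that the pushforward of N(μ₀, σ₀²) under f equals the equal-variance mixture a·N(μ₁, σ²) + (1−a)·N(μ₂, σ²). Then for each i ∈ {1, 2}, the pushforward of N(μᵢ, σ²) under f⁻¹ is not a Gaussian measure: there are no ν ∈ ℝ and ρ > 0 with (f⁻¹)_* N(μᵢ, σ²) = N(ν, ρ²). -/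
open MeasureTheory ProbabilityTheory

/-- The Gaussian probability measure `N(m, s²)` on `ℝ`. -/
noncomputable def gauss (m s : ℝ) : Measure ℝ :=
  gaussianReal m ⟨s ^ 2, sq_nonneg s⟩

/-- `f` is an admissible flow: a bijection, continuously differentiable, with
nonvanishing derivative. -/
def IsAdmissibleFlow (f : ℝ → ℝ) : Prop :=
  Function.Bijective f ∧ ContDiff ℝ 1 f ∧ ∀ z : ℝ, deriv f z ≠ 0

/-!
If `(f⁻¹)_* N(μᵢ, σ²)` were a Gaussian `N(ν, ρ²)`, then `f` would push `N(ν, ρ²)` onto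
`N(μᵢ, σ²)`. A continuous bijection of `ℝ` is strictly monotone, so it matches the distribution
functions of the two measures, which are strictly increasing; hence it agrees with the monotone
affine map doing the same, and `f` is affine. Then `f_* N(μ₀, σ₀²)` is Gaussian, which an
equal-variance two-component mixture with distinct means is not: the modulus of its characteristic
function is `e^{-σ²t²/2} |a e^{it(μ₁ - μ₂)} + 1 - a|`, equal to the Gaussian envelope at
`t = 2π / (μ₁ - μ₂)` but a factor `|1 - 2a| < 1` below it at `t = π / (μ₁ - μ₂)`, whereas for a
Gaussian it is exactly `e^{-wt²/2}`.
-/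

open Real Set Function
open scoped NNReal ENNReal Complex
open Complex (I)

lemma MeasurableEmbedding.measurable_invFun_of_surjective {α β : Type*} [MeasurableSpace α]
    [MeasurableSpace β] [Nonempty α] {f : α → β} (hf : MeasurableEmbedding f)
    (hsurj : Surjective f) :
    Measurable (invFun f) := fun s hs => by
  rw [← image_eq_preimage_of_inverse (Function.leftInverse_invFun hf.injective)
    (Function.rightInverse_invFun hsurj)]
  exact hf.measurableSet_image.2 hs

lemma eq_of_strictMono_of_map_eq {μ : Measure ℝ} {f g : ℝ → ℝ} (hf : StrictMono f)
    (hg : StrictMono g) (hfg : μ.map f = μ.map g)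
    (hcdf : StrictMono fun t => μ.map f (Iic t)) : f = g := by
  have map_Iic {h : ℝ → ℝ} (hh : StrictMono h) (x : ℝ) : μ.map h (Iic (h x)) = μ (Iic x) := by
    rw [Measure.map_apply hh.monotone.measurable measurableSet_Iic]
    exact congrArg μ (ext fun y => hh.le_iff_le)
  funext x
  apply hcdf.injective
  dsimp only
  rw [map_Iic hf, hfg, map_Iic hg]

section CharFun

variable {E : Type*} [NormedAddCommGroup E] [InnerProductSpace ℝ E] [MeasurableSpace E]

lemma charFun_add_measure [OpensMeasurableSpace E] (μ ν : Measure E) [IsFiniteMeasure μ]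
    [IsFiniteMeasure ν] (t : E) :
    charFun (μ + ν) t = charFun μ t + charFun ν t := by
  simp_rw [charFun_apply]
  exact integral_add_measure ((integrable_const (1 : ℝ)).mono (by fun_prop) (by simp))
    ((integrable_const (1 : ℝ)).mono (by fun_prop) (by simp))

lemma charFun_smul_measure (c : ℝ≥0∞) (μ : Measure E) (t : E) :
    charFun (c • μ) t = c.toReal • charFun μ t := by
  simp_rw [charFun_apply, integral_smul_measure]

end CharFun

lemma norm_charFun_gaussianReal (μ : ℝ) (v : ℝ≥0) (t : ℝ) :
    ‖charFun (gaussianReal μ v) t‖ = rexp (-(v * t ^ 2 / 2)) := by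
  rw [charFun_gaussianReal, Complex.norm_exp]
  congr 1
  simp [Complex.sub_re, Complex.mul_re, ← Complex.ofReal_pow]

lemma norm_charFun_gaussianMixture {a : ℝ} (ha : a ∈ Icc 0 1) (μ₁ μ₂ : ℝ) (v : ℝ≥0) (t : ℝ) :
    ‖charFun (ENNReal.ofReal a • gaussianReal μ₁ v + ENNReal.ofReal (1 - a) • gaussianReal μ₂ v) t‖
      = ‖a * cexp (t * (μ₁ - μ₂) * I) + (1 - a)‖ * rexp (-(v * t ^ 2 / 2)) := by
  have := (gaussianReal μ₁ v).smul_finite (ENNReal.ofReal_ne_top (r := a))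
  have := (gaussianReal μ₂ v).smul_finite (ENNReal.ofReal_ne_top (r := 1 - a))
  have hsplit : cexp (t * μ₁ * I - v * t ^ 2 / 2)
      = cexp (t * (μ₁ - μ₂) * I) * cexp (t * μ₂ * I - v * t ^ 2 / 2) := by
    rw [← Complex.exp_add]; ring_nf
  rw [charFun_add_measure, charFun_smul_measure, charFun_smul_measure, charFun_gaussianReal,
    charFun_gaussianReal, ENNReal.toReal_ofReal ha.1, ENNReal.toReal_ofReal (sub_nonneg.2 ha.2),
    hsplit, ← norm_charFun_gaussianReal μ₂ v t, charFun_gaussianReal, ← norm_mul]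
  congr 1
  simp only [Complex.real_smul]
  push_cast
  ring

lemma gaussianMixture_ne_gaussianReal {a μ₁ μ₂ : ℝ} (ha : a ∈ Ioo 0 1) (hμ : μ₁ ≠ μ₂)
    (v w : ℝ≥0) (m : ℝ) :
    ENNReal.ofReal a • gaussianReal μ₁ v + ENNReal.ofReal (1 - a) • gaussianReal μ₂ v
      ≠ gaussianReal m w := by
  intro h
  have key (t : ℝ) : ‖a * cexp (t * (μ₁ - μ₂) * I) + (1 - a)‖
      * rexp (-(v * t ^ 2 / 2)) = rexp (-(w * t ^ 2 / 2)) := by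
    rw [← norm_charFun_gaussianMixture (Ioo_subset_Icc_self ha), h, norm_charFun_gaussianReal]
  have hd : μ₁ - μ₂ ≠ 0 := sub_ne_zero.2 hμ
  -- at `t = 2π / (μ₁ - μ₂)` the two components are in phase, at `t = π / (μ₁ - μ₂)` in antiphase
  have hvw : v = w := by
    have h2π := key (2 * π / (μ₁ - μ₂))
    push_cast at h2π
    rw [div_mul_cancel₀ _ (by exact_mod_cast hd), Complex.exp_two_pi_mul_I] at h2π
    norm_num at h2π
    exact h2π.resolve_right hd
  have hπ := key (π / (μ₁ - μ₂))
  push_cast at hπ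
  rw [div_mul_cancel₀ _ (by exact_mod_cast hd), Complex.exp_pi_mul_I, hvw] at hπ
  rw [show (a : ℂ) * -1 + (1 - a) = ((1 - 2 * a : ℝ) : ℂ) by push_cast; ring, Complex.norm_real,
    Real.norm_eq_abs, mul_eq_right₀ (exp_pos _).ne'] at hπ
  cases abs_cases (1 - 2 * a) <;> linarith [ha.1, ha.2]

-- `gauss` types its variance as a bare subtype, which the `gaussianReal` lemmas do not match.
lemma gauss_eq_gaussianReal (m s : ℝ) : gauss m s = gaussianReal m (s ^ 2).toNNReal := by
  rw [gauss, Real.toNNReal_of_nonneg (sq_nonneg s)]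
  rfl

instance (m s : ℝ) : IsProbabilityMeasure (gauss m s) := by
  rw [gauss_eq_gaussianReal]
  infer_instance

lemma gauss_map_affine (c d m s : ℝ) :
    (gauss m s).map (fun x => c * x + d) = gauss (c * m + d) (|c| * s) := by
  change (gauss m s).map ((· + d) ∘ (c * ·)) = _
  rw [← Measure.map_map (measurable_add_const d) (measurable_const_mul c), gauss_eq_gaussianReal,
    gaussianReal_map_const_mul, gaussianReal_map_add_const, gauss_eq_gaussianReal]
  congr 1
  ext
  simp [mul_pow, sq_abs, sq_nonneg, mul_nonneg]

lemma gauss_Iic_strictMono (m : ℝ) {s : ℝ} (hs : s ≠ 0) :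
    StrictMono fun t => gauss m s (Iic t) := by
  have hv : (s ^ 2).toNNReal ≠ 0 := by simpa using hs
  intro t t' htt'
  have hIoc : gauss m s (Ioc t t') ≠ 0 := fun h0 => by
    rw [gauss_eq_gaussianReal] at h0
    have := gaussianReal_absolutelyContinuous' m hv h0
    simp only [Real.volume_Ioc, ENNReal.ofReal_eq_zero, tsub_nonpos] at this
    exact this.not_gt htt'
  dsimp only
  rw [← Iic_union_Ioc_eq_Iic htt'.le, measure_union (Iic_disjoint_Ioc le_rfl) measurableSet_Ioc]
  exact ENNReal.lt_add_right (measure_ne_top _ _) hIoc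

lemma eq_affine_of_strictMono_of_map_gauss {f : ℝ → ℝ} (hf : StrictMono f) {ν ρ m σ : ℝ}
    (hρ : 0 < ρ) (hσ : 0 < σ) (h : (gauss ν ρ).map f = gauss m σ) :
    f = fun x => σ / ρ * x + (m - σ / ρ * ν) := by
  have haff : StrictMono fun x => σ / ρ * x + (m - σ / ρ * ν) :=
    (strictMono_mul_left_of_pos (by positivity)).add_const _
  refine eq_of_strictMono_of_map_eq (μ := gauss ν ρ) hf haff ?_ ?_
  · rw [h, gauss_map_affine, abs_of_pos (by positivity), div_mul_cancel₀ _ hρ.ne']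
    ring_nf
  · rw [h]
    exact gauss_Iic_strictMono m hσ.ne'

lemma exists_affine_of_map_gauss {f : ℝ → ℝ} (hf : Continuous f) (hinj : Injective f)
    {ν ρ m σ : ℝ} (hρ : 0 < ρ) (hσ : 0 < σ) (h : (gauss ν ρ).map f = gauss m σ) :
    ∃ c d : ℝ, c ≠ 0 ∧ f = fun x => c * x + d := by
  rcases hf.strictMono_of_inj hinj with hmono | hanti
  · exact ⟨_, _, by positivity, eq_affine_of_strictMono_of_map_gauss hmono hρ hσ h⟩
  · have hneg : (gauss ν ρ).map (fun x => -f x) = gauss (-m) σ := by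
      change (gauss ν ρ).map (Neg.neg ∘ f) = _
      rw [← Measure.map_map measurable_neg hf.measurable, h]
      simpa using gauss_map_affine (-1) 0 m σ
    have haff := congrFun (eq_affine_of_strictMono_of_map_gauss hanti.neg hρ hσ hneg)
    refine ⟨-(σ / ρ), -(-m - σ / ρ * ν), by simp [hσ.ne', hρ.ne'], funext fun x => ?_⟩
    linarith [haff x]

lemma not_map_invFun_eq_gauss {a μ₀ μ₁ μ₂ σ₀ σ : ℝ} (ha : a ∈ Ioo 0 1) (hσ : 0 < σ)
    (hμ : μ₁ ≠ μ₂) {f : ℝ → ℝ} (hf : Continuous f) (hbij : Bijective f)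
    (hpush : (gauss μ₀ σ₀).map f
      = ENNReal.ofReal a • gauss μ₁ σ + ENNReal.ofReal (1 - a) • gauss μ₂ σ) :
    ¬ ∃ ν ρ : ℝ, 0 < ρ ∧ (gauss μ₁ σ).map (invFun f) = gauss ν ρ := by
  rintro ⟨ν, ρ, hρ, hinv⟩
  have hf_push : (gauss ν ρ).map f = gauss μ₁ σ := by
    rw [← hinv, Measure.map_map hf.measurable
      ((hf.measurableEmbedding hbij.1).measurable_invFun_of_surjective hbij.2),
      (rightInverse_invFun hbij.2).id, Measure.map_id]
  obtain ⟨c, d, -, rfl⟩ := exists_affine_of_map_gauss hf hbij.1 hρ hσ hf_push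
  rw [gauss_map_affine] at hpush
  simp only [gauss_eq_gaussianReal] at hpush
  exact gaussianMixture_ne_gaussianReal ha hμ _ _ _ hpush.symm

theorem stmt2_general (a μ₀ μ₁ μ₂ σ₀ σ : ℝ)
    (ha : a ∈ Set.Ioo (0 : ℝ) 1)
    (hσ : 0 < σ)
    (hμ : μ₁ ≠ μ₂)
    (f : ℝ → ℝ) (hf : IsAdmissibleFlow f)
    (hpush : Measure.map f (gauss μ₀ σ₀)
      = ENNReal.ofReal a • gauss μ₁ σ + ENNReal.ofReal (1 - a) • gauss μ₂ σ) :
    (¬ ∃ (ν : ℝ) (ρ : ℝ), 0 < ρ ∧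
        Measure.map (Function.invFun f) (gauss μ₁ σ) = gauss ν ρ) ∧
    (¬ ∃ (ν : ℝ) (ρ : ℝ), 0 < ρ ∧
        Measure.map (Function.invFun f) (gauss μ₂ σ) = gauss ν ρ) := by
  obtain ⟨hbij, hC1, -⟩ := hf
  have hswap : (gauss μ₀ σ₀).map f
      = ENNReal.ofReal (1 - a) • gauss μ₂ σ + ENNReal.ofReal (1 - (1 - a)) • gauss μ₁ σ := by
    rw [hpush, sub_sub_cancel, add_comm]
  exact ⟨not_map_invFun_eq_gauss ha hσ hμ hC1.continuous hbij hpush,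
    not_map_invFun_eq_gauss ⟨by linarith [ha.2], by linarith [ha.1]⟩ hσ hμ.symm
      hC1.continuous hbij hswap⟩

theorem stmt2 (a μ₀ μ₁ μ₂ σ₀ σ : ℝ)
    (ha : a ∈ Set.Ioo (0 : ℝ) 1)
    (hσ₀ : 0 < σ₀) (hσ : 0 < σ)
    (hμ : μ₁ ≠ μ₂)
    (f : ℝ → ℝ) (hf : IsAdmissibleFlow f)
    (hpush : Measure.map f (gauss μ₀ σ₀)
      = ENNReal.ofReal a • gauss μ₁ σ + ENNReal.ofReal (1 - a) • gauss μ₂ σ) :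
    (¬ ∃ (ν : ℝ) (ρ : ℝ), 0 < ρ ∧
        Measure.map (Function.invFun f) (gauss μ₁ σ) = gauss ν ρ) ∧
    (¬ ∃ (ν : ℝ) (ρ : ℝ), 0 < ρ ∧
        Measure.map (Function.invFun f) (gauss μ₂ σ) = gauss ν ρ) :=
  stmt2_general a μ₀ μ₁ μ₂ σ₀ σ ha hσ hμ f hf hpush
end

section
/- Let k ≥ 2, let a₁, …, a_k ∈ (0,1) with a₁ + ⋯ + a_k = 1, let (μ₁, σ₁), …, (μ_k, σ_k) be pairwise distinct pairs with each σ_j > 0, let μ₀ ∈ ℝ and σ₀ > 0, and let f : ℝ → ℝ be an admissible flow such that the pushforward of N(μ₀, σ₀²) under f equals the finite mixture Σ_{j=1}^{k} a_j · N(μ_j, σ_j²). Then there exists j ∈ {1, …, k} such that the pushforward of N(μ_j, σ_j²) under f⁻¹ is not a Gaussian measure: there are no μ ∈ ℝ and σ > 0 with (f⁻¹)_* N(μ_j, σ_j²) = N(μ, σ²). -/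
/-!
If every `f⁻¹_* N(μⱼ, σⱼ²)` were a Gaussian `N(mⱼ, sⱼ²)`, pulling the mixture back along `f`
would give `N(μ₀, σ₀²) = ∑ aⱼ N(mⱼ, sⱼ²)`, where the pairs `(mⱼ, sⱼ²)` are distinct because
`f_*` is injective on measures. Comparing moment generating functions,
`exp (μ₀ t + σ₀² t² / 2) = ∑ aⱼ exp (mⱼ t + sⱼ² t² / 2)` for all `t`, and a positive
combination of at least two exponentials of distinct quadratics is never a single one.
-/

open MeasureTheory ProbabilityTheory

open Filter Real Topology

lemma neg_or_eq_zero_of_forall_quadratic_le {b c K : ℝ} (hK : ∀ t, b * t + c * t ^ 2 ≤ K) :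
    c < 0 ∨ b = 0 ∧ c = 0 := by
  by_contra! h
  have hK1 : K < |K| + 1 := by linarith [le_abs_self K]
  rcases eq_or_ne b 0 with rfl | hb
  · have hc : 0 < c := h.1.lt_of_ne (h.2 rfl).symm
    have := hK (√((|K| + 1) / c))
    rw [sq_sqrt (by positivity), mul_div_cancel₀ _ hc.ne'] at this
    linarith
  · have := hK ((|K| + 1) / b)
    rw [mul_div_cancel₀ _ hb] at this
    nlinarith [mul_nonneg h.1 (sq_nonneg ((|K| + 1) / b))]

lemma tendsto_quadratic_atBot {c : ℝ} (hc : c < 0) (b : ℝ) :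
    Tendsto (fun t => b * t + c * t ^ 2) atTop atBot := by
  have hlin : Tendsto (fun t => b + c * t) atTop atBot :=
    tendsto_atBot_add_const_left _ b (tendsto_id.const_mul_atTop_of_neg hc)
  exact (tendsto_id.atTop_mul_atBot₀ hlin).congr fun t => by simp only [id]; ring

/-- With positive weights every term is bounded by `1`, so each quadratic is either zero or
tends to `-∞`; letting `t → ∞` then leaves only the (at most one) zero quadratic. -/
theorem subsingleton_of_sum_mul_exp_quadratic_eq_one {ι : Type*} [Fintype ι] {a b c : ι → ℝ}
    (ha : ∀ j, 0 < a j) (hbc : Function.Injective fun j => (b j, c j))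
    (h : ∀ t, ∑ j, a j * exp (b j * t + c j * t ^ 2) = 1) : Subsingleton ι := by
  classical
  have hshape (j : ι) : c j < 0 ∨ b j = 0 ∧ c j = 0 := by
    refine neg_or_eq_zero_of_forall_quadratic_le (K := -log (a j)) fun t => ?_
    have hterm : a j * exp (b j * t + c j * t ^ 2) ≤ 1 :=
      h t ▸ Finset.single_le_sum (f := fun i => a i * exp (b i * t + c i * t ^ 2))
        (fun i _ => (mul_pos (ha i) (exp_pos _)).le) (Finset.mem_univ j)
    rw [← exp_log (ha j), ← exp_add, exp_le_one_iff] at hterm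
    linarith
  set S := Finset.univ.filter fun j => b j = 0 ∧ c j = 0
  have hlim : Tendsto (fun t => ∑ j, a j * exp (b j * t + c j * t ^ 2)) atTop
      (𝓝 (∑ j ∈ S, a j)) := by
    rw [Finset.sum_filter]
    refine tendsto_finsetSum _ fun j _ => ?_
    split_ifs with hj
    · simp only [hj.1, hj.2, zero_mul, add_zero, exp_zero, mul_one, tendsto_const_nhds]
    · have hc := (hshape j).resolve_right hj
      simpa using (tendsto_exp_atBot.comp (tendsto_quadratic_atBot hc (b j))).const_mul (a j)
  have hS : ∑ j ∈ S, a j = ∑ j, a j := by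
    have hone : Tendsto (fun t => ∑ j, a j * exp (b j * t + c j * t ^ 2)) atTop (𝓝 1) := by
      simp only [h, tendsto_const_nhds]
    rw [tendsto_nhds_unique hlim hone, ← h 0]
    simp
  have hmem (j : ι) : j ∈ S := by
    by_contra hj
    exact hS.not_lt <| Finset.sum_lt_sum_of_subset (Finset.subset_univ S) (Finset.mem_univ j) hj
      (ha j) fun i _ _ => (ha i).le
  refine ⟨fun i j => hbc ?_⟩
  simp only [S, Finset.mem_filter] at hmem
  simp [(hmem i).2, (hmem j).2]

theorem subsingleton_of_sum_mul_exp_quadratic_eq_exp {ι : Type*} [Fintype ι] {a b c : ι → ℝ}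
    {b₀ c₀ : ℝ} (ha : ∀ j, 0 < a j) (hbc : Function.Injective fun j => (b j, c j))
    (h : ∀ t, ∑ j, a j * exp (b j * t + c j * t ^ 2) = exp (b₀ * t + c₀ * t ^ 2)) :
    Subsingleton ι := by
  refine subsingleton_of_sum_mul_exp_quadratic_eq_one (b := fun j => b j - b₀)
    (c := fun j => c j - c₀) ha (fun i j hij => hbc ?_) fun t => ?_
  · simp only [Prod.mk.injEq, sub_left_inj] at hij ⊢
    exact hij
  · have hshift (j : ι) : exp ((b j - b₀) * t + (c j - c₀) * t ^ 2)
        = exp (b j * t + c j * t ^ 2) * exp (-(b₀ * t + c₀ * t ^ 2)) := by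
      rw [← exp_add]; ring_nf
    simp only [hshift, ← mul_assoc]
    rw [← Finset.sum_mul, h, ← exp_add, add_neg_cancel, exp_zero]

lemma Continuous.measurable_invFun {α β : Type*} [TopologicalSpace α] [PolishSpace α]
    [MeasurableSpace α] [BorelSpace α] [Nonempty α] [TopologicalSpace β] [MeasurableSpace β]
    [BorelSpace β] [T2Space β] {f : α → β} (hf : Continuous f) (hbij : Function.Bijective f) :
    Measurable (Function.invFun f) :=
  (hf.measurableEmbedding hbij.1).measurable_comp_iff.mp <| by
    rw [(Function.rightInverse_invFun hbij.2).comp_eq_id]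
    exact measurable_id

lemma MeasureTheory.Measure.map_finsetSum_smul {α β ι : Type*} [MeasurableSpace α] [MeasurableSpace β] {f : α → β}
    (hf : Measurable f) (s : Finset ι) (c : ι → ENNReal) (ν : ι → Measure α) :
    Measure.map f (∑ i ∈ s, c i • ν i) = ∑ i ∈ s, c i • Measure.map f (ν i) := by
  simp only [← mapₗ_apply_of_measurable hf, _root_.map_sum, _root_.map_smul]

lemma gauss_eq_gauss_iff {m₁ m₂ s₁ s₂ : ℝ} :
    gauss m₁ s₁ = gauss m₂ s₂ ↔ m₁ = m₂ ∧ s₁ ^ 2 = s₂ ^ 2 :=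
  gaussianReal_ext_iff.trans (and_congr_right' Subtype.ext_iff)

lemma integral_exp_mul_gauss (m s t : ℝ) :
    ∫ x, exp (t * x) ∂gauss m s = exp (m * t + s ^ 2 / 2 * t ^ 2) := by
  have := congrFun (mgf_id_gaussianReal (μ := m) (v := ⟨s ^ 2, sq_nonneg s⟩)) t
  simp only [mgf, id] at this
  rw [gauss, this]
  congr 1
  change m * t + s ^ 2 * t ^ 2 / 2 = _
  ring

lemma integral_exp_mul_sum_smul_gauss {ι : Type*} [Fintype ι] {w : ι → ℝ} (hw : ∀ j, 0 ≤ w j)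
    (m s : ι → ℝ) (t : ℝ) :
    ∫ x, exp (t * x) ∂(∑ j, ENNReal.ofReal (w j) • gauss (m j) (s j))
      = ∑ j, w j * exp (m j * t + s j ^ 2 / 2 * t ^ 2) := by
  have hint (j : ι) : Integrable (fun x => exp (t * x)) (gauss (m j) (s j)) :=
    integrable_exp_mul_gaussianReal t
  rw [integral_finsetSum_measure fun j _ => (hint j).smul_measure ENNReal.ofReal_ne_top]
  simp [integral_smul_measure, integral_exp_mul_gauss, ENNReal.toReal_ofReal (hw _)]

theorem stmt9_general (k : ℕ) (hk : 2 ≤ k)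
    (a : Fin k → ℝ) (ha : ∀ j, a j ∈ Set.Ioo (0 : ℝ) 1)
    (μ σ : Fin k → ℝ) (hσ : ∀ j, 0 < σ j)
    (hdist : Function.Injective (fun j => (μ j, σ j)))
    (μ₀ σ₀ : ℝ)
    (f : ℝ → ℝ) (hf : IsAdmissibleFlow f)
    (hpush : Measure.map f (gauss μ₀ σ₀)
      = ∑ j, ENNReal.ofReal (a j) • gauss (μ j) (σ j)) :
    ∃ j : Fin k, ¬ ∃ (m : ℝ) (s : ℝ), 0 < s ∧
        Measure.map (Function.invFun f) (gauss (μ j) (σ j)) = gauss m s := by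
  by_contra! hgauss
  choose m s _ hmap using hgauss
  obtain ⟨hbij, hf1, -⟩ := hf
  have hfm : Measurable f := hf1.continuous.measurable
  have hg : Measurable (Function.invFun f) := hf1.continuous.measurable_invFun hbij
  have hmapf (j : Fin k) : Measure.map f (gauss (m j) (s j)) = gauss (μ j) (σ j) := by
    rw [← hmap j, Measure.map_map hfm hg, (Function.rightInverse_invFun hbij.2).comp_eq_id,
      Measure.map_id]
  have hmix : gauss μ₀ σ₀ = ∑ j, ENNReal.ofReal (a j) • gauss (m j) (s j) := by
    rw [← Measure.map_id (μ := gauss μ₀ σ₀), ← (Function.leftInverse_invFun hbij.1).comp_eq_id,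
      ← Measure.map_map hg hfm, hpush, Measure.map_finsetSum_smul hg]
    simp_rw [hmap]
  have hinj : Function.Injective fun j => (m j, s j ^ 2 / 2) := by
    intro i j hij
    obtain ⟨hm, hs⟩ := Prod.mk.inj hij
    have hgij : gauss (μ i) (σ i) = gauss (μ j) (σ j) := by
      rw [← hmapf i, ← hmapf j, gauss_eq_gauss_iff.mpr ⟨hm, by linarith⟩]
    obtain ⟨hμ, hσsq⟩ := gauss_eq_gauss_iff.mp hgij
    exact hdist (Prod.ext hμ ((sq_eq_sq₀ (hσ i).le (hσ j).le).mp hσsq))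
  have hsub : Subsingleton (Fin k) :=
    subsingleton_of_sum_mul_exp_quadratic_eq_exp (fun j => (ha j).1) hinj fun t => by
      rw [← integral_exp_mul_sum_smul_gauss (fun j => (ha j).1.le), ← hmix, integral_exp_mul_gauss]
  exact absurd (Fin.subsingleton_iff_le_one.mp hsub) (by omega)

theorem stmt9 (k : ℕ) (hk : 2 ≤ k)
    (a : Fin k → ℝ) (ha : ∀ j, a j ∈ Set.Ioo (0 : ℝ) 1)
    (hsum : ∑ j, a j = 1)
    (μ σ : Fin k → ℝ) (hσ : ∀ j, 0 < σ j)
    (hdist : Function.Injective (fun j => (μ j, σ j)))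
    (μ₀ σ₀ : ℝ) (hσ₀ : 0 < σ₀)
    (f : ℝ → ℝ) (hf : IsAdmissibleFlow f)
    (hpush : Measure.map f (gauss μ₀ σ₀)
      = ∑ j, ENNReal.ofReal (a j) • gauss (μ j) (σ j)) :
    ∃ j : Fin k, ¬ ∃ (m : ℝ) (s : ℝ), 0 < s ∧
        Measure.map (Function.invFun f) (gauss (μ j) (σ j)) = gauss m s :=
  stmt9_general k hk a ha μ σ hσ hdist μ₀ σ₀ f hf hpush
end
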